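/- Let M be a matroid with adjoint map φ to M'. For any set C ⊆ E(M), φ restricts to a bijection between the set of hyperplanes of M containing C and the set of points of M' contained in the flat φ(cl_M(C)). -/

import Mathlib

open Set

namespace Matroid

variable {α β : Type*}

/-- The rank of a set in a matroid, valued in `ℕ∞`. -/
noncomputable def eRk' (M : Matroid α) (X : Set α) : ℕ∞ :=
  ⨆ I ∈ {I | M.Indep I ∧ I ⊆ X}, I.encard

/-- A hyperplane is a flat of rank `r(M) - 1`. -/
def Hyperplane' (M : Matroid α) (H : Set α) : Prop :=
  M.IsFlat H ∧ M.eRk' H + 1 = M.eRk' M.E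

/-- A point is a rank-one flat. -/
def Point' (M : Matroid α) (P : Set α) : Prop :=
  M.IsFlat P ∧ M.eRk' P = 1

/-- A matroid is simple if every subset of the ground set with at most two elements
is independent (no loops and no parallel pairs). -/
def Simple' (M : Matroid α) : Prop :=
  ∀ X ⊆ M.E, X.encard ≤ 2 → M.Indep X

/-- Deletion of a set from a matroid. -/
def delete' (M : Matroid α) (D : Set α) : Matroid α := M ↾ (M.E \ D)

/-- Contraction of a set in a matroid, defined by duality. -/
def contract' (M : Matroid α) (C : Set α) : Matroid α := (M✶.delete' C)✶

/-- `φ` is an adjoint map from `M` to `M'` : `M'` is simple of the same rank as `M`,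
`φ` maps flats of `M` to flats of `M'` injectively, reversing inclusion, and restricts
to a bijection from the hyperplanes of `M` onto the points of `M'`. -/
def IsAdjointMap (M : Matroid α) (M' : Matroid β) (φ : Set α → Set β) : Prop :=
  M'.Simple' ∧ M'.eRk' M'.E = M.eRk' M.E ∧
  (∀ F, M.IsFlat F → M'.IsFlat (φ F)) ∧
  (∀ ⦃F₁ F₂⦄, M.IsFlat F₁ → M.IsFlat F₂ → φ F₁ = φ F₂ → F₁ = F₂) ∧
  (∀ ⦃F₁ F₂⦄, M.IsFlat F₁ → M.IsFlat F₂ → F₁ ⊆ F₂ → φ F₂ ⊆ φ F₁) ∧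
  (∀ H, M.Hyperplane' H → M'.Point' (φ H)) ∧
  (∀ P, M'.Point' P → ∃ H, M.Hyperplane' H ∧ φ H = P)

/-- `IsMinor N M` means `N` is obtained from `M` by a sequence of deletions and
contractions. -/
inductive IsMinor' : Matroid α → Matroid α → Prop
  | refl (M : Matroid α) : IsMinor' M M
  | delete {M N : Matroid α} (h : IsMinor' N M) (D : Set α) : IsMinor' (N.delete' D) M
  | contract {M N : Matroid α} (h : IsMinor' N M) (C : Set α) : IsMinor' (N.contract' C) M

/-- `M` has an adjoint. -/
def HasAdjoint (M : Matroid α) : Prop :=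
  ∃ (M' : Matroid (Set α)) (φ : Set α → Set (Set α)), IsAdjointMap M M' φ


section AuxLemmas

variable {M : Matroid α} {A B X Y F I J : Set α} {x : α}

lemma le_eRk'' (hI : M.Indep I) (hIX : I ⊆ X) : I.encard ≤ M.eRk' X := by
  refine le_trans ?_ (le_iSup _ I)
  simp [eRk', hI, hIX]

lemma eRk'_le_iff {n : ℕ∞} : M.eRk' X ≤ n ↔ ∀ I, M.Indep I → I ⊆ X → I.encard ≤ n := by
  simp only [eRk', iSup_le_iff, mem_setOf_eq, and_imp]

lemma IsBasis'.eRk'_eq (hI : M.IsBasis' I X) : M.eRk' X = I.encard := by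
  refine le_antisymm (eRk'_le_iff.2 fun J hJ hJX => ?_) (le_eRk'' hI.indep hI.subset)
  obtain ⟨K, hK, hJK⟩ := hJ.subset_isBasis'_of_subset hJX
  exact (encard_mono hJK).trans (hK.encard_eq_encard hI).le

lemma eRk'_mono (h : X ⊆ Y) : M.eRk' X ≤ M.eRk' Y :=
  eRk'_le_iff.2 fun I hI hIX => le_eRk'' hI (hIX.trans h)

lemma eRk'_le_encard (M : Matroid α) (X : Set α) : M.eRk' X ≤ X.encard :=
  eRk'_le_iff.2 fun _ _ hIX => encard_mono hIX

lemma Indep.eRk'_eq (hI : M.Indep I) : M.eRk' I = I.encard :=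
  le_antisymm (eRk'_le_encard M I) (le_eRk'' hI Subset.rfl)

lemma eRk'_closure_eq (M : Matroid α) (X : Set α) : M.eRk' (M.closure X) = M.eRk' X := by
  obtain ⟨I, hI⟩ := M.exists_isBasis' X
  rw [hI.eRk'_eq, (hI.isBasis_closure_right.isBasis').eRk'_eq]

lemma eRk'_le_eRk'_ground (M : Matroid α) (X : Set α) : M.eRk' X ≤ M.eRk' M.E :=
  eRk'_le_iff.2 fun I hI _ => le_eRk'' hI hI.subset_ground

lemma eRk'_ground_ne_top (M : Matroid α) [M.Finite] : M.eRk' M.E ≠ ⊤ :=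
  fun h => by
    have := (eRk'_le_encard M M.E)
    rw [h, top_le_iff, encard_eq_top_iff] at this
    exact this M.ground_finite

lemma eRk'_ne_top (M : Matroid α) [M.Finite] (X : Set α) : M.eRk' X ≠ ⊤ :=
  fun h => M.eRk'_ground_ne_top (top_le_iff.1 (h ▸ eRk'_le_eRk'_ground M X))

lemma flat_closure (M : Matroid α) (X : Set α) : M.IsFlat (M.closure X) := by
  haveI hne : Nonempty ↥{F | M.IsFlat F ∧ X ∩ M.E ⊆ F} :=
    ⟨⟨M.E, M.ground_isFlat, inter_subset_right⟩⟩
  rw [closure_def, sInter_eq_iInter]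
  exact IsFlat.iInter fun F => F.2.1

lemma flat_inter (hA : M.IsFlat A) (hB : M.IsFlat B) : M.IsFlat (A ∩ B) := by
  have h : A ∩ B = ⋂ b : Bool, (if b then A else B) := by
    ext y; simp [Bool.forall_bool, and_comm]
  rw [h]
  exact IsFlat.iInter (by rintro (_|_) <;> simpa)

/-- add one rank step -/
lemma IsFlat.eRk'_add_one_le (hA : M.IsFlat A) (hAB : A ⊆ B) (hxB : x ∈ B) (hxA : x ∉ A)
    (hxE : x ∈ M.E) : M.eRk' A + 1 ≤ M.eRk' B := by
  obtain ⟨I, hI⟩ := M.exists_isBasis' A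
  have hclI : M.closure I = A := by rw [hI.closure_eq_closure, hA.closure]
  have hxI : x ∉ I := fun h => hxA (hI.subset h)
  have hind : M.Indep (insert x I) := by
    rw [hI.indep.insert_indep_iff_of_notMem hxI]
    exact ⟨hxE, by rwa [hclI]⟩
  have hsub : insert x I ⊆ B := insert_subset hxB (hI.subset.trans hAB)
  have := le_eRk'' hind hsub
  rwa [encard_insert_of_notMem hxI, ← hI.eRk'_eq] at this

lemma IsFlat.eq_of_subset_of_eRk'_le (hA : M.IsFlat A) (hB : M.IsFlat B) (hAB : A ⊆ B)
    (h : M.eRk' B ≤ M.eRk' A) (hfin : M.eRk' B ≠ ⊤) : A = B := by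
  by_contra hne
  obtain ⟨x, hxB, hxA⟩ := exists_of_ssubset (hAB.ssubset_of_ne hne)
  have h1 := hA.eRk'_add_one_le hAB hxB hxA (hB.subset_ground hxB)
  have h2 : M.eRk' B + 1 ≤ M.eRk' B := le_trans (add_le_add_left h 1) h1
  exact absurd ((ENat.add_one_le_iff hfin).1 h2) (lt_irrefl _)

lemma IsFlat.eq_ground_of_eRk'_ground_le [M.Finite] (hA : M.IsFlat A)
    (h : M.eRk' M.E ≤ M.eRk' A) : A = M.E :=
  hA.eq_of_subset_of_eRk'_le (M.ground_isFlat) hA.subset_ground h (M.eRk'_ground_ne_top)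

lemma eRk'_insert_le (M : Matroid α) (x : α) (X : Set α) :
    M.eRk' (insert x X) ≤ M.eRk' X + 1 := by
  obtain ⟨I, hI⟩ := M.exists_isBasis' X
  have h1 : M.closure (insert x X) = M.closure (insert x I) := by
    rw [← closure_insert_closure_eq_closure_insert, ← hI.closure_eq_closure,
      closure_insert_closure_eq_closure_insert]
  calc M.eRk' (insert x X) = M.eRk' (M.closure (insert x X)) := (eRk'_closure_eq _ _).symm
    _ = M.eRk' (insert x I) := by rw [h1, eRk'_closure_eq]
    _ ≤ (insert x I).encard := eRk'_le_encard _ _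
    _ ≤ I.encard + 1 := encard_insert_le _ _
    _ = M.eRk' X + 1 := by rw [hI.eRk'_eq]

/-- there is an intermediate flat of rank one more -/
lemma IsFlat.exists_flat_rank_succ (hA : M.IsFlat A) (hB : M.IsFlat B) (hAB : A ⊆ B) (hne : A ≠ B) :
    ∃ A', M.IsFlat A' ∧ A ⊆ A' ∧ A' ⊆ B ∧ M.eRk' A' = M.eRk' A + 1 := by
  obtain ⟨I, hI⟩ := M.exists_isBasis A hA.subset_ground
  obtain ⟨J, hJ, hIJ⟩ := hI.indep.subset_isBasis_of_subset (hI.subset.trans hAB) hB.subset_ground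
  have hclI : M.closure I = A := by rw [hI.closure_eq_closure, hA.closure]
  have hclJ : M.closure J = B := by rw [hJ.closure_eq_closure, hB.closure]
  have : ¬ (J ⊆ A) := by
    intro h
    refine hne (le_antisymm hAB ?_)
    rw [← hclJ]
    exact (closure_subset_closure M h).trans_eq (by rw [hA.closure])
  obtain ⟨x, hxJ, hxA⟩ := not_subset.1 this
  have hxI : x ∉ I := fun h => hxA (hI.subset h)
  have hind : M.Indep (insert x I) := hJ.indep.subset (insert_subset hxJ hIJ)
  refine ⟨M.closure (insert x I), M.flat_closure _, ?_, ?_, ?_⟩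
  · rw [← hclI]; exact closure_subset_closure M (subset_insert _ _)
  · rw [← hclJ]; exact closure_subset_closure M (insert_subset hxJ hIJ)
  · rw [eRk'_closure_eq, hind.eRk'_eq, encard_insert_of_notMem hxI, ← hI.isBasis'.eRk'_eq]


section Adjoint

variable {M : Matroid α} {M' : Matroid β} {φ : Set α → Set β} {F F₁ F₂ : Set α}

lemma IsAdjointMap.rank_chain_le (hφ : IsAdjointMap M M' φ) [M.Finite] :
    ∀ n : ℕ, ∀ A B : Set α, M.IsFlat A → M.IsFlat B → A ⊆ B → M.eRk' B ≤ M.eRk' A + n →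
      M.eRk' B + M'.eRk' (φ B) ≤ M.eRk' A + M'.eRk' (φ A) := by
  obtain ⟨hsimp, hrank, hflat, hinj, hrev, hhp, hph⟩ := hφ
  intro n
  induction n with
  | zero =>
    intro A B hA hB hAB hle
    rw [hA.eq_of_subset_of_eRk'_le hB hAB (by simpa using hle) (M.eRk'_ne_top B)]
  | succ n ih =>
    intro A B hA hB hAB hle
    by_cases hne : A = B
    · rw [hne]
    obtain ⟨A', hA', hAA', hA'B, hrA'⟩ := hA.exists_flat_rank_succ hB hAB hne
    have hALe : M.eRk' B ≤ M.eRk' A' + n := by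
      rw [hrA']
      calc M.eRk' B ≤ M.eRk' A + (n + 1 : ℕ) := hle
        _ = M.eRk' A + 1 + n := by push_cast; ring
    have hsub : φ A' ⊆ φ A := hrev hA hA' hAA'
    have hne' : φ A' ≠ φ A := by
      intro h
      have hAA : A' = A := hinj hA' hA h
      rw [hAA] at hrA'
      have h1 : M.eRk' A + 1 ≤ M.eRk' A := hrA'.symm.le
      exact absurd ((ENat.add_one_le_iff (M.eRk'_ne_top A)).1 h1) (lt_irrefl _)
    obtain ⟨p, hpA, hpA'⟩ := exists_of_ssubset (hsub.ssubset_of_ne hne')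
    have hstep := (hflat _ hA').eRk'_add_one_le hsub hpA hpA' ((hflat _ hA).subset_ground hpA)
    calc M.eRk' B + M'.eRk' (φ B) ≤ M.eRk' A' + M'.eRk' (φ A') := ih A' B hA' hB hA'B hALe
      _ = M.eRk' A + (M'.eRk' (φ A') + 1) := by rw [hrA']; ring
      _ ≤ M.eRk' A + M'.eRk' (φ A) := add_le_add_right hstep _

lemma IsAdjointMap.eRk'_add_eq (hφ : IsAdjointMap M M' φ) [M.Finite] (hF : M.IsFlat F) :
    M.eRk' F + M'.eRk' (φ F) = M.eRk' M.E := by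
  obtain ⟨hsimp, hrank, hflat, hinj, hrev, hhp, hph⟩ := id hφ
  set n := (M.eRk' M.E).toNat with hn
  have hEn : M.eRk' M.E = (n : ℕ∞) := (ENat.coe_toNat M.eRk'_ground_ne_top).symm
  have h0 : M.eRk' (M.closure ∅) = 0 := by
    rw [eRk'_closure_eq]
    exact le_antisymm (by simpa using M.eRk'_le_encard ∅) zero_le
  have hsub0 : M.closure ∅ ⊆ F := (M.closure_subset_closure (empty_subset F)).trans_eq hF.closure
  have hup := hφ.rank_chain_le n (M.closure ∅) F (M.flat_closure ∅) hF hsub0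
    (by rw [h0, zero_add, ← hEn]; exact M.eRk'_le_eRk'_ground F)
  have hdown := hφ.rank_chain_le n F M.E hF M.ground_isFlat hF.subset_ground
    (by rw [hEn]; exact le_add_self)
  refine le_antisymm ?_ ?_
  · calc M.eRk' F + M'.eRk' (φ F) ≤ M.eRk' (M.closure ∅) + M'.eRk' (φ (M.closure ∅)) := hup
      _ = M'.eRk' (φ (M.closure ∅)) := by rw [h0, zero_add]
      _ ≤ M'.eRk' M'.E := M'.eRk'_le_eRk'_ground _
      _ = M.eRk' M.E := hrank
  · calc M.eRk' M.E ≤ M.eRk' M.E + M'.eRk' (φ M.E) := le_add_right le_rfl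
      _ ≤ M.eRk' F + M'.eRk' (φ F) := hdown

lemma IsAdjointMap.eRk'_img_ne_top (hφ : IsAdjointMap M M' φ) [M.Finite] (Y : Set β) :
    M'.eRk' Y ≠ ⊤ := by
  intro h
  have h1 : M'.eRk' Y ≤ M'.eRk' M'.E := M'.eRk'_le_eRk'_ground Y
  rw [h, top_le_iff, hφ.2.1] at h1
  exact M.eRk'_ground_ne_top h1

lemma IsAdjointMap.subset_of_image_subset (hφ : IsAdjointMap M M' φ) [M.Finite]
    (hF₁ : M.IsFlat F₁) (hF₂ : M.IsFlat F₂) (hsub : φ F₂ ⊆ φ F₁) : F₁ ⊆ F₂ := by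
  have key : ∀ n : ℕ, ∀ F₁ F₂ : Set α, M.IsFlat F₁ → M.IsFlat F₂ →
      M'.eRk' (φ F₁) ≤ n → φ F₂ ⊆ φ F₁ → F₁ ⊆ F₂ := by
    obtain ⟨hsimp, hrank, hflat, hinj, hrev, hhp, hph⟩ := id hφ
    intro n
    induction n with
    | zero =>
      intro F₁ F₂ hF₁ hF₂ hn hsub
      have hn0 : M'.eRk' (φ F₁) = 0 := by simpa using hn
      have hn2 : M'.eRk' (φ F₂) = 0 := by
        have h2 := (eRk'_mono hsub).trans_eq hn0
        simpa using h2
      have hr1 : M.eRk' M.E ≤ M.eRk' F₁ := by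
        have h := hφ.eRk'_add_eq hF₁
        rw [hn0, add_zero] at h
        exact h.ge
      have hr2 : M.eRk' M.E ≤ M.eRk' F₂ := by
        have h := hφ.eRk'_add_eq hF₂
        rw [hn2, add_zero] at h
        exact h.ge
      rw [hF₁.eq_ground_of_eRk'_ground_le hr1, hF₂.eq_ground_of_eRk'_ground_le hr2]
    | succ n ih =>
      intro F₁ F₂ hF₁ hF₂ hn hsub
      by_cases hc : F₂ ⊆ F₁
      · have h2 : φ F₁ = φ F₂ := subset_antisymm (hrev hF₂ hF₁ hc) hsub
        exact (hinj hF₁ hF₂ h2).le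
      set G := F₁ ∩ F₂ with hGdef
      have hG : M.IsFlat G := flat_inter hF₁ hF₂
      have hGF₁ : G ⊆ F₁ := inter_subset_left
      have hGF₂ : G ⊆ F₂ := inter_subset_right
      have inner : ∀ m : ℕ, ∀ W : Set α, M.IsFlat W → G ⊆ W → W ⊆ F₂ →
          M.eRk' W ≤ M.eRk' G + m → (φ F₁ ⊆ φ W ∨ F₁ ⊆ F₂) := by
        intro m
        induction m with
        | zero =>
          intro W hW hGW hWF₂ hle
          left
          rw [← hG.eq_of_subset_of_eRk'_le hW hGW (by simpa using hle) (M.eRk'_ne_top W)]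
          exact hrev hG hF₁ hGF₁
        | succ m ihm =>
          intro W hW hGW hWF₂ hle
          rcases le_or_gt (M.eRk' W) (M.eRk' G) with hWG | hWG
          · left
            rw [← hG.eq_of_subset_of_eRk'_le hW hGW hWG (M.eRk'_ne_top W)]
            exact hrev hG hF₁ hGF₁
          rcases le_or_gt (M.eRk' W) (M.eRk' G + 1) with hW1 | hW1
          · -- rank W = rank G + 1
            have hWG1 : M.eRk' W = M.eRk' G + 1 :=
              le_antisymm hW1 ((ENat.add_one_le_iff (M.eRk'_ne_top G)).2 hWG)
            have hWnF₁ : ¬ W ⊆ F₁ := by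
              intro h'
              exact absurd (eRk'_mono (subset_inter h' hWF₂)) (not_le.2 hWG)
            obtain ⟨x, hxW, hxF₁⟩ := not_subset.1 hWnF₁
            have hxG : x ∉ G := fun h => hxF₁ (hGF₁ h)
            have hxE : x ∈ M.E := hW.subset_ground hxW
            have hinsE : insert x G ⊆ M.E := insert_subset hxE (hG.subset_ground)
            have hWeq : W = M.closure (insert x G) := by
              refine ((M.flat_closure (insert x G)).eq_of_subset_of_eRk'_le hW
                ((M.closure_subset_closure (insert_subset hxW hGW)).trans_eq hW.closure)
                ?_ (M.eRk'_ne_top W)).symm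
              rw [hWG1]
              exact hG.eRk'_add_one_le
                ((subset_insert x G).trans (M.subset_closure (insert x G) hinsE))
                (M.mem_closure_of_mem (mem_insert x G) hinsE) hxG hxE
            set J := M.closure (F₁ ∪ W) with hJdef
            have hJflat : M.IsFlat J := M.flat_closure _
            have hunE : F₁ ∪ W ⊆ M.E := union_subset hF₁.subset_ground hW.subset_ground
            have hF₁J : F₁ ⊆ J := subset_union_left.trans (M.subset_closure _ hunE)
            have hWJ : W ⊆ J := subset_union_right.trans (M.subset_closure _ hunE)
            have hJrk : M.eRk' J = M.eRk' F₁ + 1 := by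
              refine le_antisymm ?_ (hF₁.eRk'_add_one_le hF₁J (hWJ hxW) hxF₁ hxE)
              have hsub1 : F₁ ∪ W ⊆ M.closure (insert x F₁) := by
                refine union_subset ((subset_insert x F₁).trans (M.subset_closure (insert x F₁)
                  (insert_subset hxE hF₁.subset_ground))) ?_
                rw [hWeq]
                exact M.closure_subset_closure (insert_subset_insert hGF₁)
              calc M.eRk' J ≤ M.eRk' (M.closure (insert x F₁)) :=
                    eRk'_mono (closure_subset_closure_of_subset_closure hsub1)
                _ = M.eRk' (insert x F₁) := eRk'_closure_eq M _
                _ ≤ M.eRk' F₁ + 1 := M.eRk'_insert_le x F₁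
            have hφJ : M'.eRk' (φ F₁) = M'.eRk' (φ J) + 1 := by
              have h1 : M.eRk' F₁ + M'.eRk' (φ F₁) = M.eRk' F₁ + (M'.eRk' (φ J) + 1) := by
                rw [hφ.eRk'_add_eq hF₁, ← hφ.eRk'_add_eq hJflat, hJrk]
                ring
              exact WithTop.add_left_cancel (M.eRk'_ne_top F₁) h1
            by_cases hPJ : φ F₂ ⊆ φ J
            · right
              have hJn : M'.eRk' (φ J) ≤ (n : ℕ∞) := by
                have h2 : M'.eRk' (φ J) + 1 ≤ (n : ℕ∞) + 1 := by
                  rw [← hφJ]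
                  exact_mod_cast hn
                exact (ENat.add_le_add_iff_right ENat.one_ne_top).1 h2
              exact hF₁J.trans (ih J F₂ hJflat hF₂ hJn hPJ)
            · left
              obtain ⟨p, hpF₂, hpJ⟩ := not_subset.1 hPJ
              set D := φ F₁ ∩ φ W with hDdef
              have hDflat : M'.IsFlat D := flat_inter (hflat _ hF₁) (hflat _ hW)
              have hJD : φ J ⊆ D :=
                subset_inter (hrev hF₁ hJflat hF₁J) (hrev hW hJflat hWJ)
              have hpD : p ∈ D := ⟨hsub hpF₂, hrev hW hF₂ hWF₂ hpF₂⟩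
              have hpE' : p ∈ M'.E := (hflat _ hF₂).subset_ground hpF₂
              have hstep := (hflat _ hJflat).eRk'_add_one_le hJD hpD hpJ hpE'
              have hD : D = φ F₁ := by
                refine hDflat.eq_of_subset_of_eRk'_le (hflat _ hF₁) inter_subset_left
                  ?_ (hφ.eRk'_img_ne_top _)
                rw [hφJ]
                exact hstep
              exact (hD ▸ inter_subset_right : φ F₁ ⊆ φ W)
          · -- rank W ≥ rank G + 2
            obtain ⟨IG, hIG⟩ := M.exists_isBasis G hG.subset_ground
            obtain ⟨JW, hJW, hIGJW⟩ :=
              hIG.indep.subset_isBasis_of_subset (hIG.subset.trans hGW) hW.subset_ground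
            have hIGfin : IG.encard ≠ ⊤ := by
              rw [encard_ne_top_iff]
              exact M.ground_finite.subset hIG.indep.subset_ground
            have hcard : IG.encard + 2 ≤ JW.encard := by
              rw [← hIG.isBasis'.eRk'_eq, ← hJW.isBasis'.eRk'_eq]
              have hG1 : M.eRk' G + 1 ≠ ⊤ := by
                intro h
                rw [ENat.add_eq_top] at h
                rcases h with h | h
                · exact M.eRk'_ne_top G h
                · simp at h
              have h2 := (ENat.add_one_le_iff hG1).2 hW1
              calc M.eRk' G + 2 = M.eRk' G + 1 + 1 := by ring
                _ ≤ M.eRk' W := h2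
            have hdiff2 : 2 ≤ (JW \ IG).encard := by
              have hsum := encard_diff_add_encard_of_subset hIGJW
              have : IG.encard + 2 ≤ (JW \ IG).encard + IG.encard := by
                rw [hsum]; exact hcard
              rw [add_comm (JW \ IG).encard IG.encard] at this
              exact (WithTop.add_le_add_iff_left hIGfin).1 this
            obtain ⟨u, v, hu0, hv0, huv⟩ := one_lt_encard_iff.1
              (lt_of_lt_of_le (by norm_num : (1:ℕ∞) < 2) hdiff2)
            have hu : u ∈ JW \ IG := hu0
            have hv : v ∈ JW \ IG := hv0
            set X := M.closure (JW \ {u}) with hXdef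
            set Y := M.closure (JW \ {v}) with hYdef
            have hXflat : M.IsFlat X := M.flat_closure _
            have hYflat : M.IsFlat Y := M.flat_closure _
            have hclIG : M.closure IG = G := by rw [hIG.closure_eq_closure, hG.closure]
            have hGX : G ⊆ X := by
              rw [← hclIG]
              exact M.closure_subset_closure (subset_diff_singleton hIGJW
                (fun h => hu.2 h))
            have hGY : G ⊆ Y := by
              rw [← hclIG]
              exact M.closure_subset_closure (subset_diff_singleton hIGJW
                (fun h => hv.2 h))
            have hXW : X ⊆ W :=
              (M.closure_subset_closure (diff_subset.trans hJW.subset)).trans_eq hW.closure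
            have hYW : Y ⊆ W :=
              (M.closure_subset_closure (diff_subset.trans hJW.subset)).trans_eq hW.closure
            have hXrk : M.eRk' X + 1 = M.eRk' W := by
              rw [hXdef, eRk'_closure_eq, (hJW.indep.subset diff_subset).eRk'_eq,
                hJW.isBasis'.eRk'_eq]
              exact encard_diff_singleton_add_one hu.1
            have hYrk : M.eRk' Y + 1 = M.eRk' W := by
              rw [hYdef, eRk'_closure_eq, (hJW.indep.subset diff_subset).eRk'_eq,
                hJW.isBasis'.eRk'_eq]
              exact encard_diff_singleton_add_one hv.1
            have hvX : v ∈ X :=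
              M.subset_closure _ (diff_subset.trans hJW.indep.subset_ground)
                ⟨hv.1, by simp [huv.symm]⟩
            have hvY : v ∉ Y := hJW.indep.notMem_closure_diff_of_mem hv.1
            have hXY : X ≠ Y := fun h => hvY (h ▸ hvX)
            have hXle : M.eRk' X ≤ M.eRk' G + m := by
              have h2 : M.eRk' X + 1 ≤ (M.eRk' G + m) + 1 := by
                rw [hXrk]
                calc M.eRk' W ≤ M.eRk' G + (m + 1 : ℕ) := hle
                  _ = M.eRk' G + m + 1 := by push_cast; ring
              exact (ENat.add_le_add_iff_right ENat.one_ne_top).1 h2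
            have hYle : M.eRk' Y ≤ M.eRk' G + m := by
              have h2 : M.eRk' Y + 1 ≤ (M.eRk' G + m) + 1 := by
                rw [hYrk]
                calc M.eRk' W ≤ M.eRk' G + (m + 1 : ℕ) := hle
                  _ = M.eRk' G + m + 1 := by push_cast; ring
              exact (ENat.add_le_add_iff_right ENat.one_ne_top).1 h2
            rcases ihm X hXflat hGX (hXW.trans hWF₂) hXle with hX | hgoal
            swap; · exact Or.inr hgoal
            rcases ihm Y hYflat hGY (hYW.trans hWF₂) hYle with hY | hgoal
            swap; · exact Or.inr hgoal
            set D₂ := φ X ∩ φ Y with hD₂def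
            have hD₂flat : M'.IsFlat D₂ := flat_inter (hflat _ hXflat) (hflat _ hYflat)
            have hWD₂ : φ W ⊆ D₂ :=
              subset_inter (hrev hXflat hW hXW) (hrev hYflat hW hYW)
            have hrkXYeq : M.eRk' X = M.eRk' Y := by
              have : M.eRk' X + 1 = M.eRk' Y + 1 := by rw [hXrk, hYrk]
              exact (WithTop.add_right_cancel ENat.one_ne_top this)
            have hrkXY : M'.eRk' (φ X) = M'.eRk' (φ Y) := by
              have h1 : M.eRk' X + M'.eRk' (φ X) = M.eRk' X + M'.eRk' (φ Y) := by
                rw [hφ.eRk'_add_eq hXflat, hrkXYeq, hφ.eRk'_add_eq hYflat]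
              exact WithTop.add_left_cancel (M.eRk'_ne_top X) h1
            have hφXW : M'.eRk' (φ X) = M'.eRk' (φ W) + 1 := by
              have h1 : M.eRk' X + M'.eRk' (φ X) = M.eRk' X + (M'.eRk' (φ W) + 1) := by
                rw [hφ.eRk'_add_eq hXflat, ← hφ.eRk'_add_eq hW, ← hXrk]
                ring
              exact WithTop.add_left_cancel (M.eRk'_ne_top X) h1
            by_cases hcase : M'.eRk' (φ X) ≤ M'.eRk' D₂
            · exfalso
              have hD₂X : D₂ = φ X :=
                hD₂flat.eq_of_subset_of_eRk'_le (hflat _ hXflat) inter_subset_left hcase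
                  (hφ.eRk'_img_ne_top _)
              have hXsubY : φ X ⊆ φ Y := hD₂X ▸ inter_subset_right
              have : φ X = φ Y :=
                (hflat _ hXflat).eq_of_subset_of_eRk'_le (hflat _ hYflat) hXsubY hrkXY.ge
                  (hφ.eRk'_img_ne_top _)
              exact hXY (hinj hXflat hYflat this)
            · left
              have hD₂le : M'.eRk' D₂ ≤ M'.eRk' (φ W) := by
                have hlt := lt_of_not_ge hcase
                rw [hφXW] at hlt
                exact (ENat.lt_add_one_iff (hφ.eRk'_img_ne_top _)).1 hlt
              have hWeq' : φ W = D₂ :=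
                (hflat _ hW).eq_of_subset_of_eRk'_le hD₂flat hWD₂ hD₂le
                  (hφ.eRk'_img_ne_top _)
              rw [hWeq']
              exact subset_inter hX hY
      rcases inner (M.eRk' M.E).toNat F₂ hF₂ hGF₂ Subset.rfl (by
        calc M.eRk' F₂ ≤ M.eRk' M.E := M.eRk'_le_eRk'_ground F₂
          _ = ((M.eRk' M.E).toNat : ℕ∞) := (ENat.coe_toNat M.eRk'_ground_ne_top).symm
          _ ≤ M.eRk' G + (M.eRk' M.E).toNat := le_add_self) with hres | hres
      · have h2 : φ F₁ = φ F₂ := subset_antisymm hres hsub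
        exact (hinj hF₁ hF₂ h2).le
      · exact hres
  refine key (M'.eRk' (φ F₁)).toNat F₁ F₂ hF₁ hF₂ ?_ hsub
  exact (ENat.coe_toNat (hφ.eRk'_img_ne_top _)).symm.le

end Adjoint

end AuxLemmas

/-- An adjoint map `φ` restricts to a bijection between the hyperplanes of `M` containing
`C` and the points of `M'` contained in `φ (cl_M C)`. -/
theorem stmt14 (M : Matroid α) (M' : Matroid β) [M.Finite] (φ : Set α → Set β)
    (hφ : IsAdjointMap M M' φ) (C : Set α) (hC : C ⊆ M.E) :
    Set.BijOn φ {H | M.Hyperplane' H ∧ C ⊆ H}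
      {P | M'.Point' P ∧ P ⊆ φ (M.closure C)} := by
  obtain ⟨hsimp, hrank, hflat, hinj, hrev, hhp, hph⟩ := id hφ
  have hclC : M.IsFlat (M.closure C) := M.flat_closure C
  refine ⟨?_, ?_, ?_⟩
  · rintro H ⟨hH, hCH⟩
    refine ⟨hhp H hH, ?_⟩
    exact hrev hclC hH.1 ((M.closure_subset_closure hCH).trans_eq hH.1.closure)
  · rintro H₁ ⟨hH₁, -⟩ H₂ ⟨hH₂, -⟩ heq
    exact hinj hH₁.1 hH₂.1 heq
  · rintro P ⟨hP, hPsub⟩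
    obtain ⟨H, hH, rfl⟩ := hph P hP
    refine ⟨H, ⟨hH, ?_⟩, rfl⟩
    exact (M.subset_closure C hC).trans (hφ.subset_of_image_subset hclC hH.1 hPsub)
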